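/- Fix any μ ∈ ℝ^d and any d×d symmetric positive definite matrix Σ, and let h be the map (μ̂, Σ̂) ↦ (Σ^{1/2}μ̂ + μ, Σ^{1/2}Σ̂Σ^{1/2}) on pairs consisting of a vector in ℝ^d and a d×d symmetric positive definite matrix. Then for any (measurable) set S of such pairs, the normalized volume of h(S) equals the normalized volume of S: nvol(h(S)) = nvol(S). -/

import Mathlib

open MeasureTheory ProbabilityTheory Matrix Real
open scoped ENNReal

noncomputable section

instance matMS {d : ℕ} : MeasurableSpace (Matrix (Fin d) (Fin d) ℝ) := MeasurableSpace.pi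

/-- The `ℓ²`-operator norm of a real `d × d` matrix. -/
def opNorm {d : ℕ} (M : Matrix (Fin d) (Fin d) ℝ) : ℝ :=
  ‖(Matrix.toEuclideanCLM (𝕜 := ℝ) M)‖

/-- The Frobenius norm of a real `d × d` matrix. -/
def frobNorm {d : ℕ} (M : Matrix (Fin d) (Fin d) ℝ) : ℝ :=
  Real.sqrt (∑ i, ∑ j, (M i j) ^ 2)

/-- The Euclidean norm of a vector in `ℝ^d`. -/
def vnorm {d : ℕ} (v : Fin d → ℝ) : ℝ := Real.sqrt (∑ i, (v i) ^ 2)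

/-- The positive semidefinite square root of a matrix (junk value `0` if the matrix is not
positive semidefinite). -/
def msqrt {d : ℕ} (S : Matrix (Fin d) (Fin d) ℝ) : Matrix (Fin d) (Fin d) ℝ :=
  letI := Classical.propDecidable S.PosSemidef
  if h : S.PosSemidef then h.1.eigenvectorUnitary.1 *
    diagonal ((↑) ∘ (Real.sqrt ·) ∘ h.1.eigenvalues) *
    (star h.1.eigenvectorUnitary : Matrix (Fin d) (Fin d) ℝ) else 0

/-- `Σ^{-1/2}`, the inverse of the positive square root. -/
def sqrtInv {d : ℕ} (S : Matrix (Fin d) (Fin d) ℝ) : Matrix (Fin d) (Fin d) ℝ :=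
  (msqrt S)⁻¹

/-- `(μ̂, Σ̂) ≈_{γ,ρ,τ} (μ, Σ)`: spectral, Frobenius, and Mahalanobis closeness. -/
def approx {d : ℕ} (γ ρ τ : ℝ) (p q : (Fin d → ℝ) × Matrix (Fin d) (Fin d) ℝ) : Prop :=
  opNorm (sqrtInv q.2 * p.2 * sqrtInv q.2 - 1) ≤ γ ∧
  frobNorm (sqrtInv q.2 * p.2 * sqrtInv q.2 - 1) ≤ ρ ∧
  vnorm (sqrtInv q.2 *ᵥ (p.1 - q.1)) ≤ τ

/-- The index set for the upper-triangular entries of a `d × d` matrix. -/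
abbrev UT (d : ℕ) := { p : Fin d × Fin d // p.1 ≤ p.2 }

/-- `Proj(μ, Σ)`: the coordinates of `μ` together with the upper-triangular entries of `Σ`. -/
def proj {d : ℕ} (q : (Fin d → ℝ) × Matrix (Fin d) (Fin d) ℝ) :
    (Fin d → ℝ) × (UT d → ℝ) :=
  (q.1, fun p => q.2 p.1.1 p.1.2)

/-- Reconstruct the determinant of the symmetric matrix from its projected coordinates. -/
def detAt {d : ℕ} (θ : (Fin d → ℝ) × (UT d → ℝ)) : ℝ :=
  (Matrix.of fun i j : Fin d =>
    if h : i ≤ j then θ.2 ⟨(i, j), h⟩ else θ.2 ⟨(j, i), le_of_not_ge h⟩).det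

/-- The normalized volume `nvol(Ω) = ∫_{Proj(Ω)} det(Σ)^{-(d+2)/2} dθ`. -/
def nvol {d : ℕ} (Ω : Set ((Fin d → ℝ) × Matrix (Fin d) (Fin d) ℝ)) : ℝ≥0∞ :=
  ∫⁻ θ in proj '' Ω, ENNReal.ofReal (detAt θ ^ (-((d : ℝ) + 2) / 2)) ∂volume

/-! With `A = Σ^{1/2}`, the map `h` becomes, in the coordinates `Proj`, the affine map
`θ ↦ (A θ₁ + μ, Φ_A θ₂)`, where `Φ_A` is the congruence `X ↦ A X Aᵀ` on symmetric matrices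
read on upper-triangular entries. Its Jacobian is `det(A)^(d+2)`: a factor `det A` from the mean
and `det(A)^(d+1)` from `Φ_A`. The latter follows by diagonalising `A = U D Uᵀ`, since `Φ` is
multiplicative, `Φ_U Φ_{Uᵀ} = 1` and `Φ_D` scales the entry `(i, j)` by `λᵢ λⱼ`. As
`det(A X A) = det(A)² det X`, the weight `det(Σ)^(-(d+2)/2)` absorbs exactly this Jacobian. -/

theorem Matrix.IsSymm.mul_mul_transpose {n R : Type*} [Fintype n] [CommSemiring R]
    {M : Matrix n n R} (hM : M.IsSymm) (A : Matrix n n R) : (A * M * Aᵀ).IsSymm := by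
  rw [IsSymm, transpose_mul, transpose_mul, transpose_transpose, hM.eq, Matrix.mul_assoc]

section UpperCoords

def upperCoords (d : ℕ) : Matrix (Fin d) (Fin d) ℝ →ₗ[ℝ] (UT d → ℝ) where
  toFun M p := M p.1.1 p.1.2
  map_add' _ _ := rfl
  map_smul' _ _ := rfl

def ofUpperCoords (d : ℕ) : (UT d → ℝ) →ₗ[ℝ] Matrix (Fin d) (Fin d) ℝ where
  toFun u := Matrix.of fun i j : Fin d =>
    if h : i ≤ j then u ⟨(i, j), h⟩ else u ⟨(j, i), le_of_not_ge h⟩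
  map_add' u v := by
    ext i j; simp only [of_apply, Matrix.add_apply, Pi.add_apply]; split <;> rfl
  map_smul' c u := by
    ext i j; simp only [of_apply, Matrix.smul_apply, Pi.smul_apply]; split <;> rfl

variable {d : ℕ}

theorem upperCoords_ofUpperCoords (u : UT d → ℝ) : upperCoords d (ofUpperCoords d u) = u :=
  funext fun p => dif_pos p.2

theorem ofUpperCoords_upperCoords {M : Matrix (Fin d) (Fin d) ℝ} (hM : M.IsSymm) :
    ofUpperCoords d (upperCoords d M) = M := by
  ext i j
  change (if h : i ≤ j then M i j else M j i) = M i j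
  split
  · rfl
  · exact hM.apply i j

theorem isSymm_ofUpperCoords (u : UT d → ℝ) : (ofUpperCoords d u).IsSymm := by
  refine IsSymm.ext fun i j => ?_
  change (if h : j ≤ i then _ else _) = if h : i ≤ j then _ else _
  rcases lt_trichotomy i j with h | rfl | h
  · rw [dif_neg h.not_ge, dif_pos h.le]
  · rfl
  · rw [dif_pos h.le, dif_neg h.not_ge]

theorem measurable_ofUpperCoords : Measurable (ofUpperCoords d) := by
  refine measurable_pi_lambda _ fun i => measurable_pi_lambda _ fun j => ?_
  by_cases h : i ≤ j
  · simpa only [ofUpperCoords, LinearMap.coe_mk, AddHom.coe_mk, of_apply, dif_pos h]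
      using measurable_pi_apply _
  · simpa only [ofUpperCoords, LinearMap.coe_mk, AddHom.coe_mk, of_apply, dif_neg h]
      using measurable_pi_apply _

theorem detAt_eq (θ : (Fin d → ℝ) × (UT d → ℝ)) : detAt θ = (ofUpperCoords d θ.2).det :=
  rfl

theorem proj_image_eq_preimage {Ω : Set ((Fin d → ℝ) × Matrix (Fin d) (Fin d) ℝ)}
    (hΩ : ∀ p ∈ Ω, p.2.IsSymm) :
    proj '' Ω = (fun θ => (θ.1, ofUpperCoords d θ.2)) ⁻¹' Ω := by
  ext θ
  constructor
  · rintro ⟨p, hp, rfl⟩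
    change (p.1, ofUpperCoords d (upperCoords d p.2)) ∈ Ω
    rwa [ofUpperCoords_upperCoords (hΩ p hp)]
  · intro hθ
    exact ⟨_, hθ, Prod.ext rfl (upperCoords_ofUpperCoords θ.2)⟩

end UpperCoords

theorem prod_mul_over_le_pairs {α M : Type*} [Fintype α] [LinearOrder α] [CommMonoid M]
    (f : α → M) :
    ∏ p : {p : α × α // p.1 ≤ p.2}, f p.1.1 * f p.1.2 =
      (∏ i, f i) ^ (Fintype.card α + 1) := by
  classical
  set s := Finset.univ.filter fun p : α × α => p.1 ≤ p.2
  set t := Finset.univ.filter fun p : α × α => p.2 ≤ p.1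
  have hunion : s ∪ t = Finset.univ := by
    ext p; simpa [s, t] using le_total p.1 p.2
  have hinter : s ∩ t = (Finset.univ : Finset α).diag := by
    ext ⟨i, j⟩; simp [s, t, le_antisymm_iff]
  have hswap : ∏ p ∈ s, f p.2 = ∏ p ∈ t, f p.1 :=
    Finset.prod_equiv (Equiv.prodComm α α) (by simp [s, t]) (by simp)
  calc ∏ p : {p : α × α // p.1 ≤ p.2}, f p.1.1 * f p.1.2
      = (∏ p ∈ s, f p.1) * ∏ p ∈ t, f p.1 := by
        have hs : ∀ p, p ∈ s ↔ p.1 ≤ p.2 := fun p => by simp [s]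
        rw [Finset.prod_mul_distrib, ← hswap, Finset.prod_subtype s hs (fun p => f p.1),
          Finset.prod_subtype s hs (fun p => f p.2)]
    _ = (∏ p : α × α, f p.1) * ∏ i, f i := by
        rw [← Finset.prod_union_inter, hunion, hinter, Finset.diag, Finset.prod_map]; rfl
    _ = (∏ i, f i) ^ (Fintype.card α + 1) := by
        simp only [Fintype.prod_prod_type, Finset.prod_const, Finset.card_univ]
        rw [Finset.prod_pow, pow_succ]

section UpperCongr

variable {d : ℕ}

def upperCongr (A : Matrix (Fin d) (Fin d) ℝ) : Module.End ℝ (UT d → ℝ) :=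
  upperCoords d ∘ₗ LinearMap.mulLeftRight ℝ (A, Aᵀ) ∘ₗ ofUpperCoords d

theorem ofUpperCoords_upperCongr (A : Matrix (Fin d) (Fin d) ℝ) (u : UT d → ℝ) :
    ofUpperCoords d (upperCongr A u) = A * ofUpperCoords d u * Aᵀ :=
  ofUpperCoords_upperCoords ((isSymm_ofUpperCoords u).mul_mul_transpose A)

theorem upperCongr_mul (A B : Matrix (Fin d) (Fin d) ℝ) :
    upperCongr (A * B) = upperCongr A * upperCongr B := by
  refine LinearMap.ext fun u => ?_
  change upperCoords d (A * B * ofUpperCoords d u * (A * B)ᵀ)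
    = upperCoords d (A * ofUpperCoords d (upperCongr B u) * Aᵀ)
  rw [ofUpperCoords_upperCongr, transpose_mul]
  simp only [Matrix.mul_assoc]

theorem upperCongr_one : upperCongr (1 : Matrix (Fin d) (Fin d) ℝ) = 1 := by
  refine LinearMap.ext fun u => ?_
  change upperCoords d (1 * ofUpperCoords d u * 1ᵀ) = u
  rw [transpose_one, Matrix.one_mul, Matrix.mul_one, upperCoords_ofUpperCoords]

theorem upperCongr_diagonal (c : Fin d → ℝ) :
    upperCongr (diagonal c) = toLin' (diagonal fun p : UT d => c p.1.1 * c p.1.2) := by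
  refine LinearMap.ext fun u => funext fun p => ?_
  change (diagonal c * ofUpperCoords d u * (diagonal c)ᵀ) p.1.1 p.1.2 = _
  rw [diagonal_transpose, mul_diagonal, diagonal_mul, toLin'_apply, mulVec_diagonal]
  change c p.1.1 * (if h : p.1.1 ≤ p.1.2 then _ else _) * c p.1.2 = _
  rw [dif_pos p.2]
  ring

theorem det_upperCongr {A : Matrix (Fin d) (Fin d) ℝ} (hA : A.IsHermitian) :
    (upperCongr A).det = A.det ^ (d + 1) := by
  set U : Matrix (Fin d) (Fin d) ℝ := ↑hA.eigenvectorUnitary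
  set c : Fin d → ℝ := RCLike.ofReal ∘ hA.eigenvalues
  have hUUt : U * Uᵀ = 1 := Matrix.mem_unitaryGroup_iff.mp hA.eigenvectorUnitary.2
  have hA_eq : A = U * diagonal c * Uᵀ := hA.spectral_theorem
  have hdetU : (upperCongr U).det * (upperCongr Uᵀ).det = 1 := by
    rw [← map_mul, ← upperCongr_mul, hUUt, upperCongr_one, map_one]
  calc (upperCongr A).det
      = (upperCongr U).det * (upperCongr Uᵀ).det * (upperCongr (diagonal c)).det := by
        rw [hA_eq, upperCongr_mul, upperCongr_mul, map_mul, map_mul]; ring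
    _ = (∏ i, c i) ^ (d + 1) := by
        rw [hdetU, one_mul, upperCongr_diagonal, LinearMap.det_toLin', det_diagonal,
          prod_mul_over_le_pairs, Fintype.card_fin]
    _ = A.det ^ (d + 1) := by rw [hA.det_eq_prod_eigenvalues]; rfl

theorem det_ofUpperCoords_upperCongr (A : Matrix (Fin d) (Fin d) ℝ) (u : UT d → ℝ) :
    (ofUpperCoords d (upperCongr A u)).det = A.det ^ 2 * (ofUpperCoords d u).det := by
  rw [ofUpperCoords_upperCongr, det_mul, det_mul, det_transpose]
  ring

end UpperCongr

theorem lintegral_image_affine {E : Type*} [NormedAddCommGroup E] [NormedSpace ℝ E]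
    [FiniteDimensional ℝ E] [MeasurableSpace E] [BorelSpace E] (μ : Measure E)
    [μ.IsAddHaarMeasure] {L : E →L[ℝ] E} (hL : L.det ≠ 0) (b : E) {s : Set E}
    (hs : MeasurableSet s) (g : E → ℝ≥0∞) :
    ∫⁻ x in (fun x => L x + b) '' s, g x ∂μ =
      ∫⁻ x in s, ENNReal.ofReal |L.det| * g (L x + b) ∂μ := by
  have hLinj : Function.Injective L :=
    (Module.End.isUnit_iff _).1 ((LinearMap.isUnit_iff_isUnit_det _).2 hL.isUnit) |>.1
  exact lintegral_image_eq_lintegral_abs_det_fderiv_mul μ hs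
    (fun x _ => (L.hasFDerivAt.add_const b).hasFDerivWithinAt)
    (fun x _ y _ h => hLinj (add_right_cancel h)) g

theorem abs_pow_mul_rpow_sq_mul {a x : ℝ} (ha : a ≠ 0) (hx : 0 ≤ x) (n : ℕ) :
    |a| ^ n * (a ^ 2 * x) ^ (-(n : ℝ) / 2) = x ^ (-(n : ℝ) / 2) := by
  have ha' : 0 < |a| := abs_pos.2 ha
  rw [← sq_abs, Real.mul_rpow (by positivity) hx, ← Real.rpow_natCast_mul ha'.le,
    ← mul_assoc, ← Real.rpow_natCast, ← Real.rpow_add ha']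
  rw [Nat.cast_ofNat, show (n : ℝ) + 2 * (-(n : ℝ) / 2) = 0 by ring, Real.rpow_zero, one_mul]

theorem nvol_image_affine_congr {d : ℕ} {A : Matrix (Fin d) (Fin d) ℝ} (hA : A.IsHermitian)
    (hdet : A.det ≠ 0) (μ : Fin d → ℝ)
    {Ω : Set ((Fin d → ℝ) × Matrix (Fin d) (Fin d) ℝ)}
    (hΩ : MeasurableSet Ω) (hpos : ∀ p ∈ Ω, p.2.PosSemidef) :
    nvol ((fun p : (Fin d → ℝ) × Matrix (Fin d) (Fin d) ℝ =>
      (A *ᵥ p.1 + μ, A * p.2 * A)) '' Ω) = nvol Ω := by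
  have hAt : Aᵀ = A := (isHermitian_iff_isSymm.1 hA).eq
  have hsymm : ∀ p ∈ Ω, p.2.IsSymm := fun p hp => isHermitian_iff_isSymm.1 (hpos p hp).1
  let L : ((Fin d → ℝ) × (UT d → ℝ)) →L[ℝ] (Fin d → ℝ) × (UT d → ℝ) :=
    LinearMap.toContinuousLinearMap ((mulVecLin A).prodMap (upperCongr A))
  have hLdet : L.det = A.det ^ (d + 2) := by
    change LinearMap.det ((mulVecLin A).prodMap (upperCongr A)) = _
    rw [LinearMap.det_prodMap, ← toLin'_apply', LinearMap.det_toLin', det_upperCongr hA]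
    ring
  have hproj := proj_image_eq_preimage hsymm
  have hmeas : MeasurableSet (proj '' Ω) := by
    rw [hproj]
    exact (measurable_fst.prodMk (measurable_ofUpperCoords.comp measurable_snd)) hΩ
  have himg : proj '' ((fun p : (Fin d → ℝ) × Matrix (Fin d) (Fin d) ℝ =>
      (A *ᵥ p.1 + μ, A * p.2 * A)) '' Ω) = (fun θ => L θ + (μ, 0)) '' (proj '' Ω) := by
    rw [Set.image_image, Set.image_image]
    refine Set.image_congr fun p hp => Prod.ext rfl ?_
    change upperCoords d (A * p.2 * A)
      = upperCoords d (A * ofUpperCoords d (upperCoords d p.2) * Aᵀ) + 0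
    rw [ofUpperCoords_upperCoords (hsymm p hp), hAt, add_zero]
  have : (volume : Measure ((Fin d → ℝ) × (UT d → ℝ))).IsAddHaarMeasure :=
    Measure.prod.instIsAddHaarMeasure _ _
  rw [nvol, nvol, himg, lintegral_image_affine volume (hLdet ▸ pow_ne_zero _ hdet) _ hmeas]
  refine setLIntegral_congr_fun hmeas fun θ hθ => ?_
  rw [hproj] at hθ
  have hθpos : 0 ≤ detAt θ := (hpos _ hθ).det_nonneg
  have hdetAt : detAt (L θ + (μ, 0)) = A.det ^ 2 * detAt θ := by
    change (ofUpperCoords d (upperCongr A θ.2 + 0)).det = _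
    rw [add_zero, det_ofUpperCoords_upperCongr, detAt_eq]
  rw [hLdet, hdetAt, ← ENNReal.ofReal_mul (abs_nonneg _), abs_pow]
  exact_mod_cast congrArg ENNReal.ofReal (abs_pow_mul_rpow_sq_mul hdet hθpos (d + 2))

section Msqrt

variable {d : ℕ} {S : Matrix (Fin d) (Fin d) ℝ}

theorem msqrt_eq (hS : S.PosSemidef) :
    msqrt S = (hS.1.eigenvectorUnitary : Matrix (Fin d) (Fin d) ℝ) *
      diagonal (fun i => √(hS.1.eigenvalues i)) *
      star (hS.1.eigenvectorUnitary : Matrix (Fin d) (Fin d) ℝ) := by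
  rw [msqrt, dif_pos hS]
  rfl

theorem isHermitian_msqrt (hS : S.PosSemidef) : (msqrt S).IsHermitian := by
  rw [msqrt_eq hS]
  exact ((PosSemidef.diagonal fun i => Real.sqrt_nonneg _).mul_mul_conjTranspose_same _).1

theorem msqrt_mul_self (hS : S.PosSemidef) : msqrt S * msqrt S = S := by
  set U : Matrix (Fin d) (Fin d) ℝ := ↑hS.1.eigenvectorUnitary
  have hUU : star U * U = 1 := Matrix.mem_unitaryGroup_iff'.mp hS.1.eigenvectorUnitary.2
  set D : Matrix (Fin d) (Fin d) ℝ := diagonal fun i => √(hS.1.eigenvalues i)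
  have hDD : D * D = diagonal (RCLike.ofReal ∘ hS.1.eigenvalues) := by
    rw [diagonal_mul_diagonal]
    exact congrArg diagonal (funext fun i => Real.mul_self_sqrt (hS.eigenvalues_nonneg i))
  conv_rhs => rw [hS.1.spectral_theorem, Unitary.conjStarAlgAut_apply, ← hDD]
  rw [msqrt_eq hS]
  simp only [Matrix.mul_assoc]
  rw [← Matrix.mul_assoc (star U) U, hUU, Matrix.one_mul]

theorem det_msqrt_ne_zero (hS : S.PosDef) : (msqrt S).det ≠ 0 := by
  intro h
  have := congrArg det (msqrt_mul_self hS.posSemidef)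
  rw [det_mul, h, zero_mul] at this
  exact hS.det_pos.ne this

end Msqrt

/-- Lemma: the normalized volume is invariant under the map
`(μ̂, Σ̂) ↦ (Σ^{1/2} μ̂ + μ, Σ^{1/2} Σ̂ Σ^{1/2})`. -/
theorem nvol_invariant_under_scaling {d : ℕ} (μ : Fin d → ℝ)
    (S : Matrix (Fin d) (Fin d) ℝ) (hS : S.PosDef)
    (Ω : Set ((Fin d → ℝ) × Matrix (Fin d) (Fin d) ℝ))
    (hΩ : MeasurableSet Ω) (hpos : ∀ p ∈ Ω, Matrix.PosDef p.2) :
    nvol ((fun p : (Fin d → ℝ) × Matrix (Fin d) (Fin d) ℝ =>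
        (msqrt S *ᵥ p.1 + μ, msqrt S * p.2 * msqrt S)) '' Ω) = nvol Ω := by
  exact nvol_image_affine_congr (isHermitian_msqrt hS.posSemidef) (det_msqrt_ne_zero hS) μ hΩ
    fun p hp => (hpos p hp).posSemidef
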